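/- arXiv:2104.05149 — 4 statements merged into one kernel-verified Lean document; each statement's English description precedes it below -/
import Mathlib

section
/- Let G₁ = (0,0), G₂ = (1,1), G₃ = (1,-1), and G₀ = (2/3, 0) (the centroid of G₁,G₂,G₃). If a bivariate polynomial q of total degree at most 3 satisfies ∇q(Gⱼ) = (0,0) for j = 0,1,2,3 and q(G₀) = q(G₁) = 0, then q = 0. -/
open MvPolynomial

noncomputable def XX (i j : ℕ) : Fin 2 →₀ ℕ := Finsupp.single 0 i + Finsupp.single 1 j

lemma XX_apply0 (i j : ℕ) : XX i j 0 = i := by simp [XX, Finsupp.single_apply]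
lemma XX_apply1 (i j : ℕ) : XX i j 1 = j := by simp [XX, Finsupp.single_apply]

lemma XX_rep (d : Fin 2 →₀ ℕ) : d = XX (d 0) (d 1) := by
  ext i; fin_cases i <;> simp [XX, Finsupp.single_apply]

lemma XX_inj {i j i' j' : ℕ} : XX i j = XX i' j' ↔ i = i' ∧ j = j' := by
  constructor
  · intro h
    exact ⟨by rw [← XX_apply0 i j, h, XX_apply0], by rw [← XX_apply1 i j, h, XX_apply1]⟩
  · rintro ⟨rfl, rfl⟩; rfl

lemma eval_mono (f : Fin 2 → ℝ) (d : Fin 2 →₀ ℕ) (a : ℝ) :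
    eval f (monomial d a) = a * f 0 ^ d 0 * f 1 ^ d 1 := by
  rw [eval_monomial, Finsupp.prod_fintype _ _ (by simp), Fin.prod_univ_two, mul_assoc]

lemma XX_sub_apply (i j : ℕ) (k l : Fin 2) :
    ((XX i j - Finsupp.single k 1 : Fin 2 →₀ ℕ)) l = XX i j l - Finsupp.single k 1 l :=
  Finsupp.tsub_apply _ _ _

/-- Unisolvency: if a bivariate cubic q has vanishing gradient at
    G₀=(2/3,0), G₁=(0,0), G₂=(1,1), G₃=(1,-1) and q(G₀)=q(G₁)=0, then q = 0. -/
theorem stmt3 (q : MvPolynomial (Fin 2) ℝ) (hq : q.totalDegree ≤ 3)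
    (hgrad : ∀ G ∈ [((2 : ℝ) / 3, (0 : ℝ)), (0, 0), (1, 1), (1, -1)],
      eval ![G.1, G.2] (pderiv (0 : Fin 2) q) = 0 ∧
      eval ![G.1, G.2] (pderiv (1 : Fin 2) q) = 0)
    (hG0 : eval ![(2 : ℝ) / 3, 0] q = 0)
    (hG1 : eval ![(0 : ℝ), 0] q = 0) :
    q = 0 := by
  have hbig : ∀ i j : ℕ, 3 < i + j → coeff (XX i j) q = 0 := by
    intro i j hij
    by_contra h
    have hmem : XX i j ∈ q.support := by simpa [mem_support_iff] using h
    have := MvPolynomial.le_totalDegree hmem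
    have hsum : (XX i j).sum (fun _ e => e) = i + j := by
      rw [Finsupp.sum_fintype _ _ (by simp), Fin.sum_univ_two, XX_apply0, XX_apply1]
    omega
  have hq' : q = monomial (XX 0 0) (coeff (XX 0 0) q) + monomial (XX 1 0) (coeff (XX 1 0) q)
      + monomial (XX 0 1) (coeff (XX 0 1) q) + monomial (XX 2 0) (coeff (XX 2 0) q)
      + monomial (XX 1 1) (coeff (XX 1 1) q) + monomial (XX 0 2) (coeff (XX 0 2) q)
      + monomial (XX 3 0) (coeff (XX 3 0) q) + monomial (XX 2 1) (coeff (XX 2 1) q)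
      + monomial (XX 1 2) (coeff (XX 1 2) q) + monomial (XX 0 3) (coeff (XX 0 3) q) := by
    ext d
    obtain ⟨i, j, rfl⟩ : ∃ i j, d = XX i j := ⟨d 0, d 1, XX_rep d⟩
    simp only [coeff_add, coeff_monomial]
    by_cases h : i + j ≤ 3
    · have hi : i ≤ 3 := by omega
      have hj : j ≤ 3 := by omega
      interval_cases i <;> interval_cases j <;> first
        | omega
        | simp [XX_inj]
    · rw [hbig i j (by omega)]
      have hf : ∀ a b : ℕ, a + b ≤ 3 → ¬ (XX a b = XX i j) := by
        intro a b hab hEq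
        rw [XX_inj] at hEq
        omega
      rw [if_neg (hf 0 0 (by norm_num)), if_neg (hf 1 0 (by norm_num)),
        if_neg (hf 0 1 (by norm_num)), if_neg (hf 2 0 (by norm_num)),
        if_neg (hf 1 1 (by norm_num)), if_neg (hf 0 2 (by norm_num)),
        if_neg (hf 3 0 (by norm_num)), if_neg (hf 2 1 (by norm_num)),
        if_neg (hf 1 2 (by norm_num)), if_neg (hf 0 3 (by norm_num))]
      norm_num
  have h0 := hgrad ((2:ℝ)/3, 0) (by simp)
  have h1 := hgrad (0, 0) (by simp)
  have h2 := hgrad (1, 1) (by simp)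
  have h3 := hgrad (1, -1) (by simp)
  obtain ⟨h0x, h0y⟩ := h0
  obtain ⟨h1x, h1y⟩ := h1
  obtain ⟨h2x, h2y⟩ := h2
  obtain ⟨h3x, h3y⟩ := h3
  rw [hq'] at h0x h0y h1x h1y h2x h2y h3x h3y hG0 hG1
  simp only [map_add, pderiv_monomial, eval_mono, XX_sub_apply, XX_apply0, XX_apply1,
    Finsupp.single_apply, Matrix.cons_val_zero, Matrix.cons_val_one, Matrix.head_cons]
  at h0x h0y h1x h1y h2x h2y h3x h3y hG0 hG1
  norm_num at h0x h0y h1x h1y h2x h2y h3x h3y hG0 hG1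
  have e00 : coeff (XX 0 0) q = 0 := by linarith
  have e10 : coeff (XX 1 0) q = 0 := by linarith
  have e01 : coeff (XX 0 1) q = 0 := by linarith
  have e20 : coeff (XX 2 0) q = 0 := by linarith
  have e11 : coeff (XX 1 1) q = 0 := by linarith
  have e02 : coeff (XX 0 2) q = 0 := by linarith
  have e30 : coeff (XX 3 0) q = 0 := by linarith
  have e21 : coeff (XX 2 1) q = 0 := by linarith
  have e12 : coeff (XX 1 2) q = 0 := by linarith
  have e03 : coeff (XX 0 3) q = 0 := by linarith
  rw [hq', e00, e10, e01, e20, e11, e02, e30, e21, e12, e03]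
  simp
end

section
/- Let K be a triangle with vertices V₁, V₂, V₃, let G₁, G₂, G₃ be the centers of the medians, namely G₁ = V₁/2 + V₂/4 + V₃/4, G₂ = V₁/4 + V₂/2 + V₃/4, G₃ = V₁/4 + V₂/4 + V₃/2, and let G₀ be the centroid of K. If a polynomial q of degree at most 3 satisfies ∇q(Gⱼ) = 0 for j = 0,1,2,3 and q(G₀) = q(G₁) = 0, then q = 0. -/
open MvPolynomial

private lemma eval_bind1 (g : Fin 2 → ℝ) (f : Fin 2 → MvPolynomial (Fin 2) ℝ)
    (φ : MvPolynomial (Fin 2) ℝ) :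
    eval g (bind₁ f φ) = eval (fun i => eval g (f i)) φ :=
  eval₂Hom_bind₁ (RingHom.id ℝ) g f φ

private lemma pderiv_bind1 (f : Fin 2 → MvPolynomial (Fin 2) ℝ) (i : Fin 2)
    (q : MvPolynomial (Fin 2) ℝ) :
    pderiv i (bind₁ f q)
      = bind₁ f (pderiv 0 q) * pderiv i (f 0) + bind₁ f (pderiv 1 q) * pderiv i (f 1) := by
  induction q using MvPolynomial.induction_on with
  | C c => simp
  | add p r hp hr => simp only [map_add, hp, hr]; ring
  | mul_X p k hp =>
      fin_cases k <;>
        · simp only [Fin.mk_zero, Fin.mk_one, Fin.isValue, map_mul, bind₁_X_right, pderiv_mul,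
            hp, pderiv_X_self, mul_one, pderiv_X_of_ne (by decide : (1:Fin 2) ≠ 0),
            pderiv_X_of_ne (by decide : (0:Fin 2) ≠ 1), mul_zero, add_zero, zero_add, map_add,
            map_one, map_zero]
          ring

private lemma td_bind1 (f : Fin 2 → MvPolynomial (Fin 2) ℝ) (hf : ∀ i, (f i).totalDegree ≤ 1)
    (q : MvPolynomial (Fin 2) ℝ) : (bind₁ f q).totalDegree ≤ q.totalDegree := by
  conv_lhs => rw [q.as_sum, map_sum]
  refine totalDegree_finsetSum_le fun m hm => ?_
  rw [bind₁_monomial]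
  refine (totalDegree_mul _ _).trans ?_
  rw [totalDegree_C, zero_add]
  refine le_trans ((totalDegree_finset_prod _ _).trans ?_) (le_totalDegree hm)
  rw [Finsupp.sum]
  refine Finset.sum_le_sum fun i _ => (totalDegree_pow _ _).trans ?_
  calc m i * (f i).totalDegree ≤ m i * 1 := Nat.mul_le_mul_left _ (hf i)
    _ = m i := Nat.mul_one _

private noncomputable def mij (i j : ℕ) : Fin 2 →₀ ℕ := Finsupp.single 0 i + Finsupp.single 1 j

private lemma mij_eq_iff {a b i j : ℕ} : mij a b = mij i j ↔ a = i ∧ b = j := by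
  constructor
  · intro h
    have h0 := DFunLike.congr_fun h 0
    have h1 := DFunLike.congr_fun h 1
    simp [mij, Finsupp.single_apply] at h0 h1
    exact ⟨h0, h1⟩
  · rintro ⟨rfl, rfl⟩; rfl

private lemma mon_mij (a b : ℕ) (c : ℝ) :
    (C c * X 0 ^ a * X 1 ^ b : MvPolynomial (Fin 2) ℝ) = monomial (mij a b) c := by
  simp [mij, X_pow_eq_monomial, C_mul_monomial, monomial_mul]

private lemma repr3 (p : MvPolynomial (Fin 2) ℝ) (h : p.totalDegree ≤ 3) :
    p = C (coeff (mij 0 0) p) * X 0 ^ 0 * X 1 ^ 0 + C (coeff (mij 1 0) p) * X 0 ^ 1 * X 1 ^ 0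
      + C (coeff (mij 0 1) p) * X 0 ^ 0 * X 1 ^ 1 + C (coeff (mij 2 0) p) * X 0 ^ 2 * X 1 ^ 0
      + C (coeff (mij 1 1) p) * X 0 ^ 1 * X 1 ^ 1 + C (coeff (mij 0 2) p) * X 0 ^ 0 * X 1 ^ 2
      + C (coeff (mij 3 0) p) * X 0 ^ 3 * X 1 ^ 0 + C (coeff (mij 2 1) p) * X 0 ^ 2 * X 1 ^ 1
      + C (coeff (mij 1 2) p) * X 0 ^ 1 * X 1 ^ 2 + C (coeff (mij 0 3) p) * X 0 ^ 0 * X 1 ^ 3 := by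
  simp only [mon_mij]
  ext m
  have hm : m = mij (m 0) (m 1) := by
    ext k; fin_cases k <;> simp [mij, Finsupp.single_apply]
  by_cases hd : m 0 + m 1 ≤ 3
  · have hi : m 0 ≤ 3 := by omega
    have hj : m 1 ≤ 3 - m 0 := by omega
    rw [hm]
    generalize m 0 = i at hi hj ⊢
    generalize m 1 = j at hj ⊢
    simp only [coeff_add, coeff_monomial]
    interval_cases i <;> interval_cases j <;> simp [mij_eq_iff]
  · have hsum : (∑ i ∈ m.support, m i) = m 0 + m 1 := by
      rw [show (∑ i ∈ m.support, m i) = m.sum fun _ e => e from rfl,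
        Finsupp.sum_fintype _ _ (fun _ => rfl), Fin.sum_univ_two]
    have h1 : coeff m p = 0 :=
      coeff_eq_zero_of_totalDegree_lt (by rw [hsum]; omega)
    have hne : ∀ a b : ℕ, a + b ≤ 3 → ¬(mij a b = m) := by
      intro a b hab hcon
      rw [hm, mij_eq_iff] at hcon
      omega
    simp only [coeff_add, coeff_monomial, h1,
      if_neg (hne 0 0 (by norm_num)), if_neg (hne 1 0 (by norm_num)),
      if_neg (hne 0 1 (by norm_num)), if_neg (hne 2 0 (by norm_num)),
      if_neg (hne 1 1 (by norm_num)), if_neg (hne 0 2 (by norm_num)),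
      if_neg (hne 3 0 (by norm_num)), if_neg (hne 2 1 (by norm_num)),
      if_neg (hne 1 2 (by norm_num)), if_neg (hne 0 3 (by norm_num)), add_zero]
private lemma deg_aff (u v w : ℝ) :
    (C u + C v * X 0 + C w * X 1 : MvPolynomial (Fin 2) ℝ).totalDegree ≤ 1 := by
  refine le_trans (totalDegree_add _ _) (max_le (le_trans (totalDegree_add _ _) (max_le ?_ ?_)) ?_)
  · simp
  · exact le_trans (totalDegree_mul _ _) (by simp)
  · exact le_trans (totalDegree_mul _ _) (by simp)
set_option maxHeartbeats 3000000 in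
/-- Unisolvency on a general triangle: let K have vertices V₁,V₂,V₃ (affinely independent),
    G₀ the centroid and G₁,G₂,G₃ the centers of the medians. If a bivariate cubic q has
    vanishing gradient at G₀,G₁,G₂,G₃ and q(G₀)=q(G₁)=0, then q = 0. -/
theorem stmt4 (V₁ V₂ V₃ : ℝ × ℝ) (hV : AffineIndependent ℝ ![V₁, V₂, V₃])
    (G₀ G₁ G₂ G₃ : ℝ × ℝ)
    (hG₀ : G₀ = (1 / 3 : ℝ) • V₁ + (1 / 3 : ℝ) • V₂ + (1 / 3 : ℝ) • V₃)
    (hG₁ : G₁ = (1 / 2 : ℝ) • V₁ + (1 / 4 : ℝ) • V₂ + (1 / 4 : ℝ) • V₃)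
    (hG₂ : G₂ = (1 / 4 : ℝ) • V₁ + (1 / 2 : ℝ) • V₂ + (1 / 4 : ℝ) • V₃)
    (hG₃ : G₃ = (1 / 4 : ℝ) • V₁ + (1 / 4 : ℝ) • V₂ + (1 / 2 : ℝ) • V₃)
    (q : MvPolynomial (Fin 2) ℝ) (hq : q.totalDegree ≤ 3)
    (hgrad : ∀ G ∈ [G₀, G₁, G₂, G₃],
      eval ![G.1, G.2] (pderiv (0 : Fin 2) q) = 0 ∧
      eval ![G.1, G.2] (pderiv (1 : Fin 2) q) = 0)
    (hv₀ : eval ![G₀.1, G₀.2] q = 0)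
    (hv₁ : eval ![G₁.1, G₁.2] q = 0) :
    q = 0 := by
  classical
  have key : ∀ w2 w3 : ℝ, w2 * (V₂.1 - V₁.1) + w3 * (V₃.1 - V₁.1) = 0 →
      w2 * (V₂.2 - V₁.2) + w3 * (V₃.2 - V₁.2) = 0 → w2 = 0 ∧ w3 = 0 := by
    intro w2 w3 h1 h2
    have hs : (Finset.univ.sum ![-(w2 + w3), w2, w3]) = 0 := by
      rw [Fin.sum_univ_three]
      simp only [Matrix.cons_val_zero, Matrix.cons_val_one, Matrix.head_cons,
        Matrix.cons_val_two, Matrix.tail_cons]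
      ring
    have hv : (∑ e : Fin 3, (![-(w2 + w3), w2, w3]) e • (![V₁, V₂, V₃]) e) = 0 := by
      rw [Fin.sum_univ_three]
      simp only [Matrix.cons_val_zero, Matrix.cons_val_one, Matrix.head_cons,
        Matrix.cons_val_two, Matrix.tail_cons]
      have hsm : ∀ (r : ℝ) (z : ℝ × ℝ), r • z = (r * z.1, r * z.2) := fun r z => rfl
      rw [hsm, hsm, hsm, Prod.mk_add_mk, Prod.mk_add_mk, Prod.ext_iff]
      constructor
      · simpa using by linear_combination h1
      · simpa using by linear_combination h2
    have hz := affineIndependent_iff.1 hV Finset.univ ![-(w2 + w3), w2, w3] hs hv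
    refine ⟨?_, ?_⟩
    · simpa using hz 1 (Finset.mem_univ 1)
    · simpa using hz 2 (Finset.mem_univ 2)
  set a1 := V₂.1 - V₁.1 with ha1
  set a2 := V₂.2 - V₁.2 with ha2
  set b1 := V₃.1 - V₁.1 with hb1
  set b2 := V₃.2 - V₁.2 with hb2
  have hdet : a1 * b2 - a2 * b1 ≠ 0 := by
    intro hd
    obtain ⟨e1, e2⟩ := key b1 (-a1) (by ring) (by linear_combination -hd)
    obtain ⟨e3, e4⟩ := key b2 (-a2) (by linear_combination hd) (by ring)
    have hV21 : V₂ = V₁ := by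
      have p1 : V₂.1 = V₁.1 := by rw [ha1] at e2; linarith
      have p2 : V₂.2 = V₁.2 := by rw [ha2] at e4; linarith
      exact Prod.ext p1 p2
    have : (1 : Fin 3) = 0 := hV.injective (by simp [hV21])
    exact absurd this (by decide)
  set f : Fin 2 → MvPolynomial (Fin 2) ℝ :=
    ![C V₁.1 + C a1 * X 0 + C b1 * X 1, C V₁.2 + C a2 * X 0 + C b2 * X 1] with hfdef
  set p := bind₁ f q with hpdef
  have hfd : ∀ i, (f i).totalDegree ≤ 1 := by
    intro i
    fin_cases i <;> simp only [hfdef, Matrix.cons_val_zero, Matrix.cons_val_one,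
      Matrix.head_cons, Fin.mk_zero, Fin.mk_one, Fin.isValue] <;> exact deg_aff _ _ _
  have hpd : p.totalDegree ≤ 3 := le_trans (td_bind1 f hfd q) hq
  have hef : ∀ t : Fin 2 → ℝ, (fun k => eval t (f k)) =
      ![V₁.1 + a1 * t 0 + b1 * t 1, V₁.2 + a2 * t 0 + b2 * t 1] := by
    intro t
    funext k
    fin_cases k <;> simp [hfdef]
  have e₀ : (fun k => eval ![(1:ℝ)/3, 1/3] (f k)) = ![G₀.1, G₀.2] := by
    rw [hef]
    funext k
    fin_cases k <;>
      simp [hG₀, ha1, ha2, hb1, hb2] <;> ring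
  have e₁ : (fun k => eval ![(1:ℝ)/4, 1/4] (f k)) = ![G₁.1, G₁.2] := by
    rw [hef]
    funext k
    fin_cases k <;>
      simp [hG₁, ha1, ha2, hb1, hb2] <;> ring
  have e₂ : (fun k => eval ![(1:ℝ)/2, 1/4] (f k)) = ![G₂.1, G₂.2] := by
    rw [hef]
    funext k
    fin_cases k <;>
      simp [hG₂, ha1, ha2, hb1, hb2] <;> ring
  have e₃ : (fun k => eval ![(1:ℝ)/4, 1/2] (f k)) = ![G₃.1, G₃.2] := by
    rw [hef]
    funext k
    fin_cases k <;>
      simp [hG₃, ha1, ha2, hb1, hb2] <;> ring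
  have hx₀ : eval ![(1:ℝ)/3, 1/3] (pderiv (0 : Fin 2) p) = 0 := by
    rw [hpdef, pderiv_bind1, map_add, map_mul, map_mul, eval_bind1, eval_bind1, e₀,
      (hgrad G₀ (by simp)).1, (hgrad G₀ (by simp)).2, zero_mul, zero_mul, add_zero]
  have hy₀ : eval ![(1:ℝ)/3, 1/3] (pderiv (1 : Fin 2) p) = 0 := by
    rw [hpdef, pderiv_bind1, map_add, map_mul, map_mul, eval_bind1, eval_bind1, e₀,
      (hgrad G₀ (by simp)).1, (hgrad G₀ (by simp)).2, zero_mul, zero_mul, add_zero]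
  have hx₁ : eval ![(1:ℝ)/4, 1/4] (pderiv (0 : Fin 2) p) = 0 := by
    rw [hpdef, pderiv_bind1, map_add, map_mul, map_mul, eval_bind1, eval_bind1, e₁,
      (hgrad G₁ (by simp)).1, (hgrad G₁ (by simp)).2, zero_mul, zero_mul, add_zero]
  have hy₁ : eval ![(1:ℝ)/4, 1/4] (pderiv (1 : Fin 2) p) = 0 := by
    rw [hpdef, pderiv_bind1, map_add, map_mul, map_mul, eval_bind1, eval_bind1, e₁,
      (hgrad G₁ (by simp)).1, (hgrad G₁ (by simp)).2, zero_mul, zero_mul, add_zero]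
  have hx₂ : eval ![(1:ℝ)/2, 1/4] (pderiv (0 : Fin 2) p) = 0 := by
    rw [hpdef, pderiv_bind1, map_add, map_mul, map_mul, eval_bind1, eval_bind1, e₂,
      (hgrad G₂ (by simp)).1, (hgrad G₂ (by simp)).2, zero_mul, zero_mul, add_zero]
  have hy₂ : eval ![(1:ℝ)/2, 1/4] (pderiv (1 : Fin 2) p) = 0 := by
    rw [hpdef, pderiv_bind1, map_add, map_mul, map_mul, eval_bind1, eval_bind1, e₂,
      (hgrad G₂ (by simp)).1, (hgrad G₂ (by simp)).2, zero_mul, zero_mul, add_zero]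
  have hx₃ : eval ![(1:ℝ)/4, 1/2] (pderiv (0 : Fin 2) p) = 0 := by
    rw [hpdef, pderiv_bind1, map_add, map_mul, map_mul, eval_bind1, eval_bind1, e₃,
      (hgrad G₃ (by simp)).1, (hgrad G₃ (by simp)).2, zero_mul, zero_mul, add_zero]
  have hy₃ : eval ![(1:ℝ)/4, 1/2] (pderiv (1 : Fin 2) p) = 0 := by
    rw [hpdef, pderiv_bind1, map_add, map_mul, map_mul, eval_bind1, eval_bind1, e₃,
      (hgrad G₃ (by simp)).1, (hgrad G₃ (by simp)).2, zero_mul, zero_mul, add_zero]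
  have hw₀ : eval ![(1:ℝ)/3, 1/3] p = 0 := by
    rw [hpdef, eval_bind1, e₀]; exact hv₀
  have hw₁ : eval ![(1:ℝ)/4, 1/4] p = 0 := by
    rw [hpdef, eval_bind1, e₁]; exact hv₁
  have hrep := repr3 p hpd
  rw [hrep] at hx₀ hy₀ hx₁ hy₁ hx₂ hy₂ hx₃ hy₃ hw₀ hw₁
  simp only [map_add, map_mul, map_pow, pderiv_mul, pderiv_pow, pderiv_C,
    pderiv_X_self, pderiv_X_of_ne (by decide : (1 : Fin 2) ≠ 0),
    pderiv_X_of_ne (by decide : (0 : Fin 2) ≠ 1), eval_C, eval_X, map_natCast,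
    map_zero, map_one] at hx₀ hy₀ hx₁ hy₁ hx₂ hy₂ hx₃ hy₃ hw₀ hw₁
  norm_num [Matrix.cons_val_zero, Matrix.cons_val_one, Matrix.head_cons]
    at hx₀ hy₀ hx₁ hy₁ hx₂ hy₂ hx₃ hy₃ hw₀ hw₁
  have z00 : coeff (mij 0 0) p = 0 := by
    linear_combination (-3 : ℝ) * hx₀ + (-3 : ℝ) * hy₀ + (-4 : ℝ) * hx₁ + (-4 : ℝ) * hy₁
      + (81 : ℝ) * hw₀ + (-80 : ℝ) * hw₁
  have z10 : coeff (mij 1 0) p = 0 := by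
    linear_combination (12 : ℝ) * hx₀ + (21 : ℝ) * hy₀ + (25 : ℝ) * hx₁ + (15 : ℝ) * hy₁
      + (1 : ℝ) * hx₂ + (1 : ℝ) * hy₂ + (-1 : ℝ) * hx₃ + (-1 : ℝ) * hy₃
      + (-432 : ℝ) * hw₀ + (432 : ℝ) * hw₁
  have z01 : coeff (mij 0 1) p = 0 := by
    linear_combination (21 : ℝ) * hx₀ + (12 : ℝ) * hy₀ + (15 : ℝ) * hx₁ + (25 : ℝ) * hy₁
      + (-1 : ℝ) * hx₂ + (-1 : ℝ) * hy₂ + (1 : ℝ) * hx₃ + (1 : ℝ) * hy₃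
      + (-432 : ℝ) * hw₀ + (432 : ℝ) * hw₁
  have z20 : coeff (mij 2 0) p = 0 := by
    linear_combination (6 : ℝ) * hx₀ + (-21 : ℝ) * hy₀ + (-36 : ℝ) * hx₁ + (-9 : ℝ) * hy₁
      + (-6 : ℝ) * hx₂ + (-7 : ℝ) * hy₂ + (1 : ℝ) * hy₃
      + (432 : ℝ) * hw₀ + (-432 : ℝ) * hw₁
  have z11 : coeff (mij 1 1) p = 0 := by
    linear_combination (-105 : ℝ) * hx₀ + (-105 : ℝ) * hy₀ + (-87 : ℝ) * hx₁ + (-87 : ℝ) * hy₁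
      + (5 : ℝ) * hx₂ + (7 : ℝ) * hy₂ + (7 : ℝ) * hx₃ + (5 : ℝ) * hy₃
      + (2160 : ℝ) * hw₀ + (-2160 : ℝ) * hw₁
  have z02 : coeff (mij 0 2) p = 0 := by
    linear_combination (-21 : ℝ) * hx₀ + (6 : ℝ) * hy₀ + (-9 : ℝ) * hx₁ + (-36 : ℝ) * hy₁
      + (1 : ℝ) * hx₂ + (-7 : ℝ) * hx₃ + (-6 : ℝ) * hy₃
      + (432 : ℝ) * hw₀ + (-432 : ℝ) * hw₁
  have z30 : coeff (mij 3 0) p = 0 := by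
    linear_combination (-24 : ℝ) * hx₀ + (40/3 : ℝ) * hx₁ + (-16/3 : ℝ) * hy₁
      + (8 : ℝ) * hx₂ + (16/3 : ℝ) * hy₂ + (8/3 : ℝ) * hx₃
  have z21 : coeff (mij 2 1) p = 0 := by
    linear_combination (84 : ℝ) * hx₀ + (84 : ℝ) * hy₀ + (76 : ℝ) * hx₁ + (60 : ℝ) * hy₁
      + (-4 : ℝ) * hx₂ + (4 : ℝ) * hy₂ + (-12 : ℝ) * hx₃ + (-4 : ℝ) * hy₃
      + (-1728 : ℝ) * hw₀ + (1728 : ℝ) * hw₁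
  have z12 : coeff (mij 1 2) p = 0 := by
    linear_combination (84 : ℝ) * hx₀ + (84 : ℝ) * hy₀ + (60 : ℝ) * hx₁ + (76 : ℝ) * hy₁
      + (-4 : ℝ) * hx₂ + (-12 : ℝ) * hy₂ + (4 : ℝ) * hx₃ + (-4 : ℝ) * hy₃
      + (-1728 : ℝ) * hw₀ + (1728 : ℝ) * hw₁
  have z03 : coeff (mij 0 3) p = 0 := by
    linear_combination (-24 : ℝ) * hy₀ + (-16/3 : ℝ) * hx₁ + (40/3 : ℝ) * hy₁
      + (8/3 : ℝ) * hy₂ + (16/3 : ℝ) * hx₃ + (8 : ℝ) * hy₃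
  have hp0 : p = 0 := by
    rw [hrep, z00, z10, z01, z20, z11, z02, z30, z21, z12, z03]
    simp
  refine MvPolynomial.funext fun x => ?_
  rw [map_zero]
  have hx : (fun k => eval ![(b2 * (x 0 - V₁.1) - b1 * (x 1 - V₁.2)) / (a1 * b2 - a2 * b1),
      (a1 * (x 1 - V₁.2) - a2 * (x 0 - V₁.1)) / (a1 * b2 - a2 * b1)] (f k)) = x := by
    rw [hef]
    funext k
    fin_cases k
    · simp only [Matrix.cons_val_zero, Matrix.cons_val_one, Matrix.head_cons,
        Fin.mk_zero, Fin.mk_one, Fin.isValue, div_eq_mul_inv]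
      linear_combination (x 0 - V₁.1) * mul_inv_cancel₀ hdet
    · simp only [Matrix.cons_val_zero, Matrix.cons_val_one, Matrix.head_cons,
        Fin.mk_zero, Fin.mk_one, Fin.isValue, div_eq_mul_inv]
      linear_combination (x 1 - V₁.2) * mul_inv_cancel₀ hdet
  have : eval x q = eval ![(b2 * (x 0 - V₁.1) - b1 * (x 1 - V₁.2)) / (a1 * b2 - a2 * b1),
      (a1 * (x 1 - V₁.2) - a2 * (x 0 - V₁.1)) / (a1 * b2 - a2 * b1)] p := by
    rw [hpdef, eval_bind1, hx]
  rw [this, hp0, map_zero]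
end

section
/- There is no interior edge of a triangulation connecting two nearly singular vertices, where a vertex V is nearly singular if Υ(V) = ∅ or |Θ - π| < ϑ_σ for all Θ ∈ Υ(V), with Υ(V) the set of sums θ(Kᵢ) + θ(Kⱼ) of angles at V of pairs of triangles Kᵢ, Kⱼ sharing V along an edge, and ϑ_σ = min(ϑ, π/6) where ϑ > 0 is a lower bound for all angles in the triangulation. -/
open EuclideanGeometry Set

noncomputable section

abbrev Pt := EuclideanSpace ℝ (Fin 2)

/-- A conforming triangulation: a finite set of nondegenerate triangles (given by their
    vertex maps `Fin 3 → Pt`) such that any two distinct triangles intersect in the convex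
    hull of their common vertices (a common vertex, a common edge, or ∅). -/
structure Triangulation where
  tris : Finset (Fin 3 → Pt)
  nondeg : ∀ T ∈ tris, AffineIndependent ℝ T
  conform : ∀ T ∈ tris, ∀ T' ∈ tris, T ≠ T' →
    convexHull ℝ (Set.range T) ∩ convexHull ℝ (Set.range T') =
      convexHull ℝ (Set.range T ∩ Set.range T')

namespace Triangulation

variable (𝒯 : Triangulation)

/-- The triangulated domain. -/
def domain : Set Pt := ⋃ T ∈ 𝒯.tris, convexHull ℝ (Set.range T)

/-- The angle of the triangle `T` at its `i`-th vertex. -/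
def angleAt (T : Fin 3 → Pt) (i : Fin 3) : ℝ := ∠ (T (i + 1)) (T i) (T (i + 2))

/-- Υ(V): the set of all sums θ(Kᵢ)+θ(Kⱼ) of the angles at V of two triangles
    Kᵢ, Kⱼ of the triangulation sharing an edge containing V. -/
def Upsilon (V : Pt) : Set ℝ :=
  {Θ | ∃ T₁ ∈ 𝒯.tris, ∃ T₂ ∈ 𝒯.tris, T₁ ≠ T₂ ∧
    ∃ i j : Fin 3, T₁ i = V ∧ T₂ j = V ∧
      (∃ W : Pt, W ≠ V ∧ W ∈ Set.range T₁ ∧ W ∈ Set.range T₂) ∧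
      Θ = angleAt T₁ i + angleAt T₂ j}

/-- A vertex V is nearly singular if Υ(V) = ∅ or |Θ - π| < ϑσ for all Θ ∈ Υ(V). -/
def NearlySingular (ϑσ : ℝ) (V : Pt) : Prop :=
  𝒯.Upsilon V = ∅ ∨ ∀ Θ ∈ 𝒯.Upsilon V, |Θ - Real.pi| < ϑσ

/-- An interior edge: an edge of some triangle whose open segment lies in the interior
    of the triangulated domain. -/
def InteriorEdge (V W : Pt) : Prop :=
  V ≠ W ∧ (∃ T ∈ 𝒯.tris, V ∈ Set.range T ∧ W ∈ Set.range T ∧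
      segment ℝ V W ∈ ((fun s : Finset (Fin 3) => convexHull ℝ (T '' s)) '' {s | s.card = 2})) ∧
    openSegment ℝ V W ⊆ interior 𝒯.domain

end Triangulation

/-! The midpoint `M` of an interior edge `VW` of a triangle `T` lies on the boundary of `T` but
in the interior of the domain, hence in a second triangle `T'`, and conformity forces `V` and `W`
to be vertices of `T'`. If `V` and `W` were nearly singular, the angles of `T` and `T'` at `V`, and
those at `W`, would each add up to more than `π - ϑ`; but the two angles of one triangle along an
edge add up to at most `π - ϑ`, so the four angles add up to at most `2π - 2ϑ`. -/

theorem exists_ne_mem_of_mem_interior_biUnion {ι X : Type*} [TopologicalSpace X]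
    {S : Set ι} (hS : S.Finite) {K : ι → Set X} (hK : ∀ i ∈ S, IsClosed (K i)) {x : X}
    (hx : x ∈ interior (⋃ i ∈ S, K i)) {j : ι} (hj : x ∉ interior (K j)) :
    ∃ i ∈ S, i ≠ j ∧ x ∈ K i := by
  by_contra! hxK
  have hclosed : IsClosed (⋃ i ∈ S \ {j}, K i) :=
    hS.sdiff.isClosed_biUnion fun i hi => hK i hi.1
  refine hj (mem_interior.2 ⟨interior (⋃ i ∈ S, K i) \ ⋃ i ∈ S \ {j}, K i, ?_,
    isOpen_interior.sdiff hclosed, hx, ?_⟩)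
  · rintro y ⟨hy, hy'⟩
    obtain ⟨i, hi, hyi⟩ := mem_iUnion₂.1 (interior_subset hy)
    obtain rfl | hij := eq_or_ne i j
    · exact hyi
    · exact absurd (mem_biUnion (show i ∈ S \ {j} from ⟨hi, hij⟩) hyi) hy'
  · simp only [mem_iUnion₂, not_exists]
    exact fun i hi => hxK i hi.1 hi.2

theorem AffineBasis.coord_midpoint_eq_zero_iff {ι k E : Type*} [Field k] [LinearOrder k]
    [IsStrictOrderedRing k] [AddCommGroup E] [Module k E] (b : AffineBasis ι k E) (i j l : ι) :
    b.coord i (midpoint k (b j) (b l)) = 0 ↔ i ≠ j ∧ i ≠ l := by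
  classical
  rw [AffineMap.map_midpoint, b.coord_apply, b.coord_apply]
  split_ifs <;> simp_all [midpoint_eq_smul_add]

theorem AffineBasis.mem_of_mem_convexHull_of_coord_ne_zero {ι k E : Type*} [Field k]
    [LinearOrder k] [IsStrictOrderedRing k] [AddCommGroup E] [Module k E]
    (b : AffineBasis ι k E) {s : Set E} (hs : s ⊆ range b) {x : E} (hx : x ∈ convexHull k s)
    {i : ι} (hi : b.coord i x ≠ 0) : b i ∈ s := by
  by_contra hbi
  refine hi (convexHull_min (t := b.coord i ⁻¹' {0}) ?_
    ((convex_singleton 0).affine_preimage (b.coord i)) hx)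
  intro y hy
  obtain ⟨j, rfl⟩ := hs hy
  exact b.coord_apply_ne fun hij => hbi (hij ▸ hy)

def triangleBasis (T : Fin 3 → Pt) (hT : AffineIndependent ℝ T) : AffineBasis (Fin 3) ℝ Pt :=
  ⟨T, hT, by simp [hT.affineSpan_eq_top_iff_card_eq_finrank_add_one]⟩

@[simp]
theorem coe_triangleBasis (T : Fin 3 → Pt) (hT : AffineIndependent ℝ T) :
    ⇑(triangleBasis T hT) = T :=
  rfl

namespace Triangulation

variable {𝒯 : Triangulation}

theorem angleAt_add_angleAt_add_angleAt {T : Fin 3 → Pt} (hT : AffineIndependent ℝ T) :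
    angleAt T 0 + angleAt T 1 + angleAt T 2 = Real.pi := by
  show ∠ (T 1) (T 0) (T 2) + ∠ (T 2) (T 1) (T 0) + ∠ (T 0) (T 2) (T 1) = Real.pi
  rw [angle_comm (T 1) (T 0), angle_comm (T 2) (T 1), angle_comm (T 0) (T 2)]
  exact angle_add_angle_add_angle_eq_pi (T 1) (hT.injective.ne (by decide : (0 : Fin 3) ≠ 2))

theorem angleAt_add_angleAt_le {T : Fin 3 → Pt} (hT : AffineIndependent ℝ T) {ϑ : ℝ}
    (hang : ∀ i, ϑ ≤ angleAt T i) {a b : Fin 3} (hab : a ≠ b) :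
    angleAt T a + angleAt T b ≤ Real.pi - ϑ := by
  have hsum := angleAt_add_angleAt_add_angleAt hT
  fin_cases a <;> fin_cases b <;>
    simp only [Fin.zero_eta, Fin.mk_one, Fin.reduceFinMk] at hab ⊢ <;>
    first | exact absurd rfl hab | linarith [hang 0, hang 1, hang 2]

theorem exists_ne_mem_convexHull_of_mem_interior {T : Fin 3 → Pt} {x : Pt}
    (hx : x ∈ interior 𝒯.domain) (hxT : x ∉ interior (convexHull ℝ (range T))) :
    ∃ T' ∈ 𝒯.tris, T' ≠ T ∧ x ∈ convexHull ℝ (range T') :=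
  exists_ne_mem_of_mem_interior_biUnion 𝒯.tris.finite_toSet
    (fun T' _ => (finite_range T').isCompact_convexHull (𝕜 := ℝ) |>.isClosed) hx hxT

theorem exists_adjacent_of_interiorEdge {V W : Pt} (h : 𝒯.InteriorEdge V W) :
    ∃ T ∈ 𝒯.tris, ∃ T' ∈ 𝒯.tris, T ≠ T' ∧ ∃ a b a' b' : Fin 3,
      a ≠ b ∧ a' ≠ b' ∧ T a = V ∧ T b = W ∧ T' a' = V ∧ T' b' = W := by
  obtain ⟨hVW, ⟨T, hT, ⟨a, rfl⟩, ⟨b, rfl⟩, -⟩, hopen⟩ := h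
  have hab : a ≠ b := fun h => hVW (congrArg T h)
  set B := triangleBasis T (𝒯.nondeg T hT)
  set M := midpoint ℝ (T a) (T b)
  have hM : M ∈ interior 𝒯.domain := hopen (midpoint_mem_openSegment (𝕜 := ℝ) _ _)
  obtain ⟨c, hca, hcb⟩ := (by decide : ∀ a b : Fin 3, ∃ c, c ≠ a ∧ c ≠ b) a b
  have hMT : M ∉ interior (convexHull ℝ (range T)) := by
    rw [← coe_triangleBasis T (𝒯.nondeg T hT), B.interior_convexHull]
    exact fun h => (h c).ne' ((B.coord_midpoint_eq_zero_iff c a b).2 ⟨hca, hcb⟩)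
  obtain ⟨T', hT', hT'T, hMT'⟩ := exists_ne_mem_convexHull_of_mem_interior hM hMT
  have hMcommon : M ∈ convexHull ℝ (range T ∩ range T') := by
    rw [← 𝒯.conform T hT T' hT' hT'T.symm]
    exact ⟨segment_subset_convexHull (mem_range_self a) (mem_range_self b)
      (midpoint_mem_segment _ _), hMT'⟩
  have hvertex : ∀ i, (i = a ∨ i = b) → T i ∈ range T' := fun i hi =>
    (B.mem_of_mem_convexHull_of_coord_ne_zero inter_subset_left hMcommon
      ((B.coord_midpoint_eq_zero_iff i a b).not.2 (by tauto))).2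
  obtain ⟨a', ha'⟩ := hvertex a (.inl rfl)
  obtain ⟨b', hb'⟩ := hvertex b (.inr rfl)
  exact ⟨T, hT, T', hT', hT'T.symm, a, b, a', b', hab, fun h => hVW (by rw [← ha', ← hb', h]),
    rfl, rfl, ha', hb'⟩

theorem angleAt_add_angleAt_mem_upsilon {T T' : Fin 3 → Pt} (hT : T ∈ 𝒯.tris)
    (hT' : T' ∈ 𝒯.tris) (hTT' : T ≠ T') {a b a' b' : Fin 3} (hab : T a ≠ T b)
    (ha : T' a' = T a) (hb : T' b' = T b) :
    angleAt T a + angleAt T' a' ∈ 𝒯.Upsilon (T a) :=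
  ⟨T, hT, T', hT', hTT', a, a', rfl, ha, ⟨T b, hab.symm, ⟨b, rfl⟩, ⟨b', hb⟩⟩, rfl⟩

theorem NearlySingular.abs_sub_pi_lt {ϑσ : ℝ} {V : Pt} (h : 𝒯.NearlySingular ϑσ V)
    {Θ : ℝ} (hΘ : Θ ∈ 𝒯.Upsilon V) : |Θ - Real.pi| < ϑσ :=
  h.elim (fun h₀ => absurd hΘ (h₀ ▸ notMem_empty Θ)) (· Θ hΘ)

end Triangulation

theorem stmt7_general (𝒯 : Triangulation) (ϑ : ℝ)
    (hang : ∀ T ∈ 𝒯.tris, ∀ i : Fin 3, ϑ ≤ Triangulation.angleAt T i)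
    (V W : Pt) (hVW : 𝒯.InteriorEdge V W) :
    ¬(𝒯.NearlySingular (min ϑ (Real.pi / 6)) V ∧
      𝒯.NearlySingular (min ϑ (Real.pi / 6)) W) := by
  rintro ⟨hV, hW⟩
  obtain ⟨T, hT, T', hT', hTT', a, b, a', b', hab, ha'b', rfl, rfl, ha', hb'⟩ :=
    Triangulation.exists_adjacent_of_interiorEdge hVW
  have hne : T a ≠ T b := (𝒯.nondeg T hT).injective.ne hab
  have hΘV := abs_lt.1 <| hV.abs_sub_pi_lt <|
    Triangulation.angleAt_add_angleAt_mem_upsilon hT hT' hTT' hne ha' hb'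
  have hΘW := abs_lt.1 <| hW.abs_sub_pi_lt <|
    Triangulation.angleAt_add_angleAt_mem_upsilon hT hT' hTT' hne.symm hb' ha'
  have hsumT := Triangulation.angleAt_add_angleAt_le (𝒯.nondeg T hT) (hang T hT) hab
  have hsumT' := Triangulation.angleAt_add_angleAt_le (𝒯.nondeg T' hT') (hang T' hT') ha'b'
  linarith [hΘV.1, hΘW.1, min_le_left ϑ (Real.pi / 6)]

/-- No interior edge of a triangulation connects two nearly singular vertices
    (with ϑσ = min(ϑ, π/6), ϑ > 0 a lower bound for all angles of the triangulation). -/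
theorem stmt7 (𝒯 : Triangulation) (ϑ : ℝ) (hϑ : 0 < ϑ)
    (hang : ∀ T ∈ 𝒯.tris, ∀ i : Fin 3, ϑ ≤ Triangulation.angleAt T i)
    (V W : Pt) (hVW : 𝒯.InteriorEdge V W) :
    ¬(𝒯.NearlySingular (min ϑ (Real.pi / 6)) V ∧
      𝒯.NearlySingular (min ϑ (Real.pi / 6)) W) :=
  stmt7_general 𝒯 ϑ hang V W hVW

end
end

section
/- Suppose q ∈ P³ is a bivariate polynomial of degree at most 3 that satisfies q(1,0) = q(2/3,0) = 0, ∇q(1,1)=∇q(1,-1)=(0,0), and q vanishes at (0,0) with ∇q(0,0)=(0,0). Then the restriction a(t) = q(1,t) has the form a(t) = β(t³ - 3t) for some constant β. -/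
open MvPolynomial

noncomputable def Lne : Fin 2 → Polynomial ℝ := ![1, Polynomial.X]

lemma evalLne (q : MvPolynomial (Fin 2) ℝ) (t : ℝ) :
    (aeval Lne q).eval t = eval ![(1:ℝ), t] q := by
  induction q using MvPolynomial.induction_on with
  | C a => simp [Lne]
  | add p r hp hr => simp [hp, hr]
  | mul_X p i hp =>
      simp only [Lne] at hp ⊢
      fin_cases i <;> simp [hp]

lemma derivLne (q : MvPolynomial (Fin 2) ℝ) :
    (aeval Lne q).derivative = aeval Lne (pderiv (1 : Fin 2) q) := by
  induction q using MvPolynomial.induction_on with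
  | C a => simp [Lne]
  | add p r hp hr => simp [hp, hr]
  | mul_X p i hp =>
      simp only [Lne] at hp ⊢
      fin_cases i <;>
        simp [pderiv_mul, Polynomial.derivative_mul, hp] <;> ring

/-- If a bivariate cubic q satisfies q(0,0)=q(2/3,0)=q(1,0)=0, ∇q(0,0)=(0,0) and
    ∇q(1,1)=∇q(1,-1)=(0,0), then a(t)=q(1,t) has the form a(t)=β(t³-3t). -/
theorem stmt10 (q : MvPolynomial (Fin 2) ℝ) (hq : q.totalDegree ≤ 3)
    (h10 : eval ![(1 : ℝ), 0] q = 0)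
    (h23 : eval ![(2 : ℝ) / 3, 0] q = 0)
    (h00 : eval ![(0 : ℝ), 0] q = 0)
    (h00x : eval ![(0 : ℝ), 0] (pderiv (0 : Fin 2) q) = 0)
    (h00y : eval ![(0 : ℝ), 0] (pderiv (1 : Fin 2) q) = 0)
    (h11x : eval ![(1 : ℝ), 1] (pderiv (0 : Fin 2) q) = 0)
    (h11y : eval ![(1 : ℝ), 1] (pderiv (1 : Fin 2) q) = 0)
    (h1m1x : eval ![(1 : ℝ), -1] (pderiv (0 : Fin 2) q) = 0)
    (h1m1y : eval ![(1 : ℝ), -1] (pderiv (1 : Fin 2) q) = 0) :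
    ∃ β : ℝ, ∀ t : ℝ, eval ![1, t] q = β * (t ^ 3 - 3 * t) := by
  set p : Polynomial ℝ := aeval Lne q with hp
  have hdeg : p.natDegree ≤ 3 := by
    have := MvPolynomial.aeval_natDegree_le q hq Lne (n := 1) (by
      intro i; fin_cases i <;> simp [Lne])
    simpa using this
  have hdeg4 : p.natDegree < 4 := by omega
  have heval : ∀ t : ℝ, p.eval t =
      p.coeff 0 + p.coeff 1 * t + p.coeff 2 * t ^ 2 + p.coeff 3 * t ^ 3 := by
    intro t
    rw [Polynomial.eval_eq_sum_range' hdeg4]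
    simp [Finset.sum_range_succ]
    try ring
  have hc4 : p.coeff 4 = 0 := Polynomial.coeff_eq_zero_of_natDegree_lt (by omega)
  have hdev : ∀ t : ℝ, (Polynomial.derivative p).eval t =
      p.coeff 1 + 2 * p.coeff 2 * t + 3 * p.coeff 3 * t ^ 2 := by
    intro t
    have hd4 : (Polynomial.derivative p).natDegree < 4 :=
      lt_of_le_of_lt (Polynomial.natDegree_derivative_le p) (by omega)
    rw [Polynomial.eval_eq_sum_range' hd4]
    simp [Finset.sum_range_succ, Polynomial.coeff_derivative, hc4]
    ring
  have h0 : p.eval 0 = 0 := by rw [evalLne]; simpa using h10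
  have hd1 : (Polynomial.derivative p).eval 1 = 0 := by
    rw [derivLne, evalLne]; exact h11y
  have hdm1 : (Polynomial.derivative p).eval (-1) = 0 := by
    rw [derivLne, evalLne]; exact h1m1y
  rw [heval 0] at h0
  rw [hdev 1] at hd1
  rw [hdev (-1)] at hdm1
  refine ⟨p.coeff 3, fun t => ?_⟩
  rw [← evalLne, heval t]
  have hc0 : p.coeff 0 = 0 := by linarith [h0]
  have hc2 : p.coeff 2 = 0 := by nlinarith [hd1, hdm1]
  have hc1 : p.coeff 1 = -3 * p.coeff 3 := by nlinarith [hd1, hdm1]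
  rw [hc0, hc1, hc2]; ring
end
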